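/- Let P₁ be a noncompact locally compact Hausdorff space in which every σ-compact subset has compact closure, let P₂ be any locally compact Hausdorff space, and let K = P₁ ⊔ P₂ be their topological disjoint union. Then there is no frame in C₀(K): there exist no index set J, no family (x_j)_{j∈J} of elements of C₀(K), and no constants 0 < c₁ ≤ c₂ forming a pointwise frame, i.e., such that for every t ∈ K the family (|x_j(t)|²)_{j∈J} is summable and c₁ ≤ Σ_{j∈J} |x_j(t)|² ≤ c₂. -/

import Mathlib

open ZeroAtInfty Filter Topology Set Function

universe u

/-!
The supports of elements of `C₀(P₁)` are σ-compact, and a countable union of σ-compact sets is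
σ-compact, so its closure is compact and therefore not all of the noncompact space `P₁`. Hence
every countable set of functions has a common zero in `P₁`. As only countably many members of a
frame are nonzero at a given point, one can choose points `t 0, t 1, …` of `P₁` recursively so
that `t n` is a zero of every function which is nonzero at some earlier point; then each function
is nonzero at no more than one `t n`. The closure of `{t n}` is compact, so the sequence has a
cluster point `w`, and by continuity every function of the frame vanishes at `w`, contradicting
the lower frame bound at `w`.
-/

namespace ZeroAtInftyContinuousMap

variable {α β : Type*} [TopologicalSpace α] [NormedAddGroup β]

theorem isCompact_setOf_le_norm (f : C₀(α, β)) {ε : ℝ} (hε : 0 < ε) :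
    IsCompact {a | ε ≤ ‖f a‖} := by
  obtain ⟨K, hK, hsub⟩ :=
    mem_cocompact.mp (f.zero_at_infty'.norm.eventually (gt_mem_nhds (by rwa [norm_zero])))
  refine hK.of_isClosed_subset (isClosed_le continuous_const f.continuous.norm) fun a ha => ?_
  by_contra haK
  exact (show ε ≤ ‖f a‖ from ha).not_gt (hsub haK)

theorem isSigmaCompact_support (f : C₀(α, β)) : IsSigmaCompact (support f) := by
  have hsupp : support f = ⋃ n : ℕ, {a | ((n : ℝ) + 1)⁻¹ ≤ ‖f a‖} := by
    ext a
    simp only [mem_support, mem_iUnion, ← norm_pos_iff]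
    constructor
    · intro ha
      obtain ⟨n, hn⟩ := exists_nat_one_div_lt ha
      exact ⟨n, by simpa using hn.le⟩
    · rintro ⟨n, hn⟩
      exact lt_of_lt_of_le (by positivity) hn
  rw [hsupp]
  exact isSigmaCompact_iUnion _ fun n => (f.isCompact_setOf_le_norm (by positivity)).isSigmaCompact

end ZeroAtInftyContinuousMap

section CommonZero

variable {X E J : Type*} [TopologicalSpace X]

theorem exists_notMem_of_isSigmaCompact (hnc : ¬ CompactSpace X)
    (hIV : ∀ s : Set X, IsSigmaCompact s → IsCompact (closure s))
    {s : Set X} (hs : IsSigmaCompact s) : ∃ u, u ∉ s := by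
  by_contra! h
  exact hnc ⟨by simpa [eq_univ_of_forall h] using hIV s hs⟩

variable [Zero E] {f : J → X → E}

theorem exists_forall_eq_zero_of_countable (hnc : ¬ CompactSpace X)
    (hIV : ∀ s : Set X, IsSigmaCompact s → IsCompact (closure s))
    (hsupp : ∀ j, IsSigmaCompact (support (f j))) {s : Set J} (hs : s.Countable) :
    ∃ u, ∀ j ∈ s, f j u = 0 := by
  obtain ⟨u, hu⟩ :=
    exists_notMem_of_isSigmaCompact hnc hIV (isSigmaCompact_biUnion hs fun j _ => hsupp j)
  exact ⟨u, fun j hj => by_contra fun hju => hu (mem_biUnion hj hju)⟩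

theorem exists_seq_eventually_eq_zero (hnc : ¬ CompactSpace X)
    (hIV : ∀ s : Set X, IsSigmaCompact s → IsCompact (closure s))
    (hsupp : ∀ j, IsSigmaCompact (support (f j))) (hcount : ∀ u, {j | f j u ≠ 0}.Countable) :
    ∃ t : ℕ → X, ∀ j, ∀ᶠ n in atTop, f j (t n) = 0 := by
  choose pt hpt using fun s : {s : Set J // s.Countable} =>
    exists_forall_eq_zero_of_countable hnc hIV hsupp s.2
  -- `S n` collects the indices that are nonzero at one of the points `pt (S 0), …, pt (S (n-1))`.
  let next (s : {s : Set J // s.Countable}) : {s : Set J // s.Countable} :=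
    ⟨s ∪ {j | f j (pt s) ≠ 0}, s.2.union (hcount _)⟩
  let S (n : ℕ) : {s : Set J // s.Countable} := next^[n] ⟨∅, countable_empty⟩
  have hS : Monotone fun n => (S n).1 := monotone_nat_of_le_succ fun n => by
    simp only [S, iterate_succ_apply']
    exact subset_union_left
  refine ⟨fun n => pt (S n), fun j => ?_⟩
  by_cases h : ∃ n, f j (pt (S n)) ≠ 0
  · obtain ⟨n, hn⟩ := h
    have hj : j ∈ (S (n + 1)).1 := by
      simp only [S, iterate_succ_apply']
      exact Or.inr hn
    exact eventually_atTop.2 ⟨n + 1, fun m hm => hpt _ j (hS hm hj)⟩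
  · push Not at h
    exact Eventually.of_forall h

theorem exists_forall_eq_zero [TopologicalSpace E] [T1Space E] (hnc : ¬ CompactSpace X)
    (hIV : ∀ s : Set X, IsSigmaCompact s → IsCompact (closure s))
    (hcont : ∀ j, Continuous (f j)) (hsupp : ∀ j, IsSigmaCompact (support (f j)))
    (hcount : ∀ u, {j | f j u ≠ 0}.Countable) : ∃ w, ∀ j, f j w = 0 := by
  obtain ⟨t, ht⟩ := exists_seq_eventually_eq_zero hnc hIV hsupp hcount
  have hrange : IsSigmaCompact (range t) := by
    rw [← iUnion_singleton_eq_range]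
    exact isSigmaCompact_iUnion _ fun n => isCompact_singleton.isSigmaCompact
  obtain ⟨w, -, hw⟩ := (hIV _ hrange).exists_mapClusterPt (f := atTop)
    (tendsto_principal.mpr (.of_forall fun n => subset_closure (mem_range_self n)))
  exact ⟨w, fun j => (isClosed_singleton.preimage (hcont j)).mem_of_mapClusterPt hw (ht j)⟩

end CommonZero

theorem no_frame_of_sum_with_KIV_general
    (P₁ : Type*) [TopologicalSpace P₁]
    (P₂ : Type*) [TopologicalSpace P₂]
    (hnc : ¬ CompactSpace P₁)
    (hIV : ∀ s : Set P₁, IsSigmaCompact s → IsCompact (closure s)) :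
    ¬ ∃ (J : Type u) (x : J → C₀(P₁ ⊕ P₂, ℂ)) (c₁ c₂ : ℝ), 0 < c₁ ∧ c₁ ≤ c₂ ∧
        ∀ t : P₁ ⊕ P₂, Summable (fun j : J => ‖x j t‖ ^ 2) ∧
          c₁ ≤ ∑' j : J, ‖x j t‖ ^ 2 ∧ (∑' j : J, ‖x j t‖ ^ 2) ≤ c₂ := by
  rintro ⟨J, x, c₁, c₂, hc₁, -, hfr⟩
  let inl : CocompactMap P₁ (P₁ ⊕ P₂) :=
    ⟨⟨Sum.inl, continuous_inl⟩, IsClosedEmbedding.inl.tendsto_cocompact⟩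
  have hcount (u : P₁) : {j | x j (.inl u) ≠ 0}.Countable :=
    (hfr (.inl u)).1.countable_support.mono fun j hj => by simpa using hj
  obtain ⟨w, hw⟩ := exists_forall_eq_zero hnc hIV (f := fun j => (x j).comp inl)
    (fun j => ((x j).comp inl).continuous) (fun j => ((x j).comp inl).isSigmaCompact_support)
    hcount
  have hlower := (hfr (.inl w)).2.1
  simp [show ∀ j, x j (.inl w) = 0 from hw] at hlower
  linarith

/-- Let `P₁` be a noncompact locally compact Hausdorff space in which every `σ`-compact
subset has compact closure, `P₂` any locally compact Hausdorff space, and `K = P₁ ⊔ P₂`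
their topological disjoint union. Then there is no (pointwise) frame in `C₀(K)`: there are
no index set `J`, family `(x j)` in `C₀(K)` and constants `0 < c₁ ≤ c₂` such that for every
`t ∈ K` the family `(‖x j t‖ ^ 2)` is summable with `c₁ ≤ ∑' j, ‖x j t‖ ^ 2 ≤ c₂`. -/
theorem no_frame_of_sum_with_KIV
    (P₁ : Type*) [TopologicalSpace P₁] [LocallyCompactSpace P₁] [T2Space P₁]
    (P₂ : Type*) [TopologicalSpace P₂] [LocallyCompactSpace P₂] [T2Space P₂]
    (hnc : ¬ CompactSpace P₁)
    (hIV : ∀ s : Set P₁, IsSigmaCompact s → IsCompact (closure s)) :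
    ¬ ∃ (J : Type u) (x : J → C₀(P₁ ⊕ P₂, ℂ)) (c₁ c₂ : ℝ), 0 < c₁ ∧ c₁ ≤ c₂ ∧
        ∀ t : P₁ ⊕ P₂, Summable (fun j : J => ‖x j t‖ ^ 2) ∧
          c₁ ≤ ∑' j : J, ‖x j t‖ ^ 2 ∧ (∑' j : J, ‖x j t‖ ^ 2) ≤ c₂ :=
  no_frame_of_sum_with_KIV_general P₁ P₂ hnc hIV
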